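/- arXiv:2206.08168 — 3 statements merged into one kernel-verified Lean document; each statement's English description precedes it below -/
import Mathlib

section
/- Suppose Assumption A1 holds with λ ∈ (0,1/2). Then ζ₁(s)ζ₂'(s) − ζ₁'(s)ζ₂(s) = 1 for all s ≥ 0, lim_{s→∞} ζ₁(s)ζ₂'(s) = (1−λ)/(1−2λ), and consequently for every n ∈ ℤ there exists s₀ ≥ r₀ such that 1 + (n−1)ζ₁(s)ζ₂'(s) ≠ 0 for all s ≥ s₀. -/
/-!
The Wronskian `ζ₁ ζ₂' - ζ₁' ζ₂` of two solutions of `ζ'' + σ ζ = 0` is constant, hence equal to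
its value `1` at `0`. Assumption A1 gives `ζ₁ ~ a t^λ`, `ζ₁' ~ a' t^(λ-1)`, `ζ₂ ~ b t^(1-λ)` and
`ζ₂' ~ b' t^(-λ)`. It only controls `|ζ^(k)|`, but `ζ₁, ζ₂ ≥ 0` tend to `∞`, so by Darboux's
theorem their derivatives are eventually positive. L'Hôpital's rule at infinity forces `a' = λ a`
and `b' = (1 - λ) b`, and the Wronskian in the limit gives `a b (1 - 2λ) = 1`, so
`ζ₁ ζ₂' → a b' = (1 - λ)/(1 - 2λ)`. This limit exceeds `1`, whereas `1 + (n - 1) L = 0` with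
`n ∈ ℤ` would force `L = 1/(1 - n) ≤ 1`.
-/

noncomputable section

open MeasureTheory Filter Real Set

/-- Euclidean space `ℝ^d`. -/
abbrev Ed (d : ℕ) : Type := EuclideanSpace ℝ (Fin d)

/-- Assumption A1 on the coefficient `σ` and the fundamental solutions `ζ₁, ζ₂` of
`ζ'' + σ ζ = 0`, with the constants `c, σ₀, c₃` and `c1 k, c2 k` (k = 0,1,2). -/
structure A1 (σ ζ₁ ζ₂ : ℝ → ℝ) (lam r₀ c σ₀ c₃ : ℝ) (c1 c2 : ℕ → ℝ) : Prop where
  lam_nonneg : 0 ≤ lam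
  lam_lt_half : lam < 1/2
  r₀_pos : 0 < r₀
  c_pos : 0 < c
  σ_cont : Continuous σ
  ζ₁_deriv : ∀ t, HasDerivAt ζ₁ (deriv ζ₁ t) t
  ζ₁_ode : ∀ t, HasDerivAt (deriv ζ₁) (-(σ t * ζ₁ t)) t
  ζ₂_deriv : ∀ t, HasDerivAt ζ₂ (deriv ζ₂ t) t
  ζ₂_ode : ∀ t, HasDerivAt (deriv ζ₂) (-(σ t * ζ₂ t)) t
  ζ₁_init : ζ₁ 0 = 1
  ζ₁'_init : deriv ζ₁ 0 = 0
  ζ₂_init : ζ₂ 0 = 0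
  ζ₂'_init : deriv ζ₂ 0 = 1
  c1_ne : ∀ k ≤ 2, c1 k ≠ 0
  c2_ne : ∀ k ≤ 2, c2 k ≠ 0
  σ_C1 : ContDiffOn ℝ 1 σ (Ici r₀)
  σ'_decay : Tendsto (fun t => t^3 * deriv σ t) atTop (nhds σ₀)
  ζ₂_lower : ∀ t > r₀, c ≤ |ζ₂ t|
  ζ₁_asymp : ∀ k ≤ 2, Tendsto (fun t => |iteratedDeriv k ζ₁ t| / t ^ (lam - (k:ℝ))) atTop (nhds (c1 k))
  ζ₂_asymp : ∀ k ≤ 2, Tendsto (fun t => |iteratedDeriv k ζ₂ t| / t ^ (1 - lam - (k:ℝ))) atTop (nhds (c2 k))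
  ζ₂_refined : Tendsto (fun t => |ζ₂ t - c2 0 * t ^ (1 - lam)| / t ^ lam) atTop (nhds c₃)
  ζ₁_nonneg : ∀ t > r₀, 0 ≤ ζ₁ t
  ζ₂_nonneg : ∀ t > r₀, 0 ≤ ζ₂ t

open Topology

theorem wronskian_eq_of_hasDerivAt {σ f f' g g' : ℝ → ℝ}
    (hf : ∀ t, HasDerivAt f (f' t) t) (hf' : ∀ t, HasDerivAt f' (-(σ t * f t)) t)
    (hg : ∀ t, HasDerivAt g (g' t) t) (hg' : ∀ t, HasDerivAt g' (-(σ t * g t)) t) (s t : ℝ) :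
    f s * g' s - f' s * g s = f t * g' t - f' t * g t := by
  have hW : ∀ t, HasDerivAt (fun t => f t * g' t - f' t * g t) 0 t := fun t =>
    (((hf t).mul (hg' t)).sub ((hf' t).mul (hg t))).congr_deriv (by ring)
  exact is_const_of_deriv_eq_zero (fun t => (hW t).differentiableAt) (fun t => (hW t).deriv) s t

section LHopital

variable {u v u' v' : ℝ → ℝ}

theorem eventually_div_lt_of_eventually_deriv_div_lt {K L : ℝ} (hKL : K < L)
    (hu : ∀ᶠ t in atTop, HasDerivAt u (u' t) t) (hv : ∀ᶠ t in atTop, HasDerivAt v (v' t) t)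
    (hv' : ∀ᶠ t in atTop, 0 < v' t) (hv_top : Tendsto v atTop atTop)
    (h : ∀ᶠ t in atTop, u' t / v' t < K) : ∀ᶠ t in atTop, u t / v t < L := by
  obtain ⟨T, hT⟩ := eventually_atTop.1 (hu.and (hv.and (hv'.and h)))
  have hmono : MonotoneOn (fun t => K * v t - u t) (Ici T) := by
    refine monotoneOn_of_hasDerivWithinAt_nonneg (convex_Ici T)
      (f' := fun t => K * v' t - u' t) (fun t ht => ?_) (fun t ht => ?_) (fun t ht => ?_)
    · exact (((hT t ht).2.1.const_mul K).sub (hT t ht).1).continuousAt.continuousWithinAt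
    · rw [interior_Ici] at ht
      exact (((hT t ht.le).2.1.const_mul K).sub (hT t ht.le).1).hasDerivWithinAt
    · rw [interior_Ici] at ht
      obtain ⟨-, -, hpos, hlt⟩ := hT t ht.le
      have := (div_lt_iff₀ hpos).1 hlt
      linarith
  have hbound : Tendsto (fun t => K + (u T - K * v T) / v t) atTop (𝓝 (K + 0)) :=
    tendsto_const_nhds.add (tendsto_const_nhds.div_atTop hv_top)
  filter_upwards [hbound.eventually (gt_mem_nhds (by linarith)), eventually_ge_atTop T,
    hv_top.eventually_gt_atTop 0] with t hlt hTt hvt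
  have hle : u t ≤ K * v t + (u T - K * v T) := by
    have := hmono self_mem_Ici hTt hTt
    simp only at this
    linarith
  calc u t / v t ≤ (K * v t + (u T - K * v T)) / v t := by gcongr
    _ = K + (u T - K * v T) / v t := by field_simp
    _ < L := hlt

theorem tendsto_div_of_tendsto_deriv_div_atTop {L : ℝ}
    (hu : ∀ᶠ t in atTop, HasDerivAt u (u' t) t) (hv : ∀ᶠ t in atTop, HasDerivAt v (v' t) t)
    (hv' : ∀ᶠ t in atTop, 0 < v' t) (hv_top : Tendsto v atTop atTop)
    (h : Tendsto (fun t => u' t / v' t) atTop (𝓝 L)) :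
    Tendsto (fun t => u t / v t) atTop (𝓝 L) := by
  rw [tendsto_order] at h ⊢
  refine ⟨fun L' hL' => ?_, fun L' hL' => ?_⟩
  · obtain ⟨K, hL'K, hKL⟩ := exists_between hL'
    have hneg := eventually_div_lt_of_eventually_deriv_div_lt (u := fun t => -u t)
      (u' := fun t => -u' t) (neg_lt_neg hL'K) (hu.mono fun t ht => ht.neg) hv hv' hv_top
      ((h.1 K hKL).mono fun t ht => by rw [neg_div]; exact neg_lt_neg ht)
    exact hneg.mono fun t ht => by rw [neg_div] at ht; exact neg_lt_neg_iff.1 ht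
  · obtain ⟨K, hLK, hKL'⟩ := exists_between hL'
    exact eventually_div_lt_of_eventually_deriv_div_lt hKL' hu hv hv' hv_top (h.2 K hLK)

end LHopital

theorem eventually_deriv_pos_of_tendsto_atTop {f f' : ℝ → ℝ}
    (hf : ∀ᶠ t in atTop, HasDerivAt f (f' t) t) (hf' : ∀ᶠ t in atTop, f' t ≠ 0)
    (h_top : Tendsto f atTop atTop) : ∀ᶠ t in atTop, 0 < f' t := by
  obtain ⟨T, hT⟩ := eventually_atTop.1 (hf.and hf')
  rcases hasDerivWithinAt_forall_lt_or_forall_gt_of_forall_ne (convex_Ici T)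
    (fun t ht => (hT t ht).1.hasDerivWithinAt) (fun t ht => (hT t ht).2) with hneg | hpos
  · have hanti : AntitoneOn f (Ici T) :=
      antitoneOn_of_hasDerivWithinAt_nonpos (convex_Ici T)
        (fun t ht => (hT t ht).1.continuousAt.continuousWithinAt)
        (fun t ht => (hT t (interior_subset ht)).1.hasDerivWithinAt)
        (fun t ht => (hneg t (interior_subset ht)).le)
    obtain ⟨t, hft, hTt⟩ :=
      ((h_top.eventually_gt_atTop (f T)).and (eventually_ge_atTop T)).exists
    exact absurd (hanti self_mem_Ici hTt hTt) (not_le.2 hft)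
  · exact eventually_atTop.2 ⟨T, hpos⟩

theorem tendsto_div_of_tendsto_abs_div {f g : ℝ → ℝ} {l : Filter ℝ} {C : ℝ}
    (h : Tendsto (fun t => |f t| / g t) l (𝓝 C)) (hf : ∀ᶠ t in l, 0 ≤ f t) :
    Tendsto (fun t => f t / g t) l (𝓝 C) :=
  h.congr' (hf.mono fun t ht => by rw [abs_of_nonneg ht])

theorem eventually_ne_zero_of_tendsto_abs_div {f g : ℝ → ℝ} {l : Filter ℝ} {C : ℝ}
    (h : Tendsto (fun t => |f t| / g t) l (𝓝 C)) (hC : C ≠ 0) : ∀ᶠ t in l, f t ≠ 0 :=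
  (h.eventually_ne hC).mono fun t ht hft => ht (by rw [hft, abs_zero, zero_div])

theorem tendsto_deriv_div_of_tendsto_abs_deriv_div {f f' g : ℝ → ℝ} {C : ℝ}
    (hf : ∀ᶠ t in atTop, HasDerivAt f (f' t) t) (h_top : Tendsto f atTop atTop)
    (h : Tendsto (fun t => |f' t| / g t) atTop (𝓝 C)) (hC : C ≠ 0) :
    Tendsto (fun t => f' t / g t) atTop (𝓝 C) :=
  tendsto_div_of_tendsto_abs_div h <|
    (eventually_deriv_pos_of_tendsto_atTop hf (eventually_ne_zero_of_tendsto_abs_div h hC)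
      h_top).mono fun _ ht => ht.le

theorem pos_of_tendsto_div_rpow {f : ℝ → ℝ} {a C : ℝ}
    (h : Tendsto (fun t => f t / t ^ a) atTop (𝓝 C)) (hf : ∀ᶠ t in atTop, 0 ≤ f t)
    (hC : C ≠ 0) : 0 < C := by
  refine lt_of_le_of_ne (ge_of_tendsto h ?_) hC.symm
  filter_upwards [hf, eventually_gt_atTop 0] with t hft ht
  exact div_nonneg hft (rpow_pos_of_pos ht a).le

theorem tendsto_atTop_of_tendsto_div_rpow {f : ℝ → ℝ} {a C : ℝ} (ha : 0 < a) (hC : 0 < C)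
    (h : Tendsto (fun t => f t / t ^ a) atTop (𝓝 C)) : Tendsto f atTop atTop := by
  refine (h.pos_mul_atTop hC (tendsto_rpow_atTop ha)).congr' ?_
  filter_upwards [eventually_gt_atTop 0] with t ht
  field_simp

theorem tendsto_mul_of_tendsto_div_rpow {f g : ℝ → ℝ} {a b C D : ℝ} (hab : a + b = 0)
    (hf : Tendsto (fun t => f t / t ^ a) atTop (𝓝 C))
    (hg : Tendsto (fun t => g t / t ^ b) atTop (𝓝 D)) :
    Tendsto (fun t => f t * g t) atTop (𝓝 (C * D)) := by
  refine (hf.mul hg).congr' ?_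
  filter_upwards [eventually_gt_atTop 0] with t ht
  rw [div_mul_div_comm, ← rpow_add ht, hab, rpow_zero, div_one]

theorem coeff_deriv_eq_of_tendsto_div_rpow {f f' : ℝ → ℝ} {a C D : ℝ} (ha : 0 < a)
    (hf : ∀ᶠ t in atTop, HasDerivAt f (f' t) t)
    (hC : Tendsto (fun t => f t / t ^ a) atTop (𝓝 C))
    (hD : Tendsto (fun t => f' t / t ^ (a - 1)) atTop (𝓝 D)) : D = a * C := by
  have hlim : Tendsto (fun t => f t / t ^ a) atTop (𝓝 (D / a)) := by
    refine tendsto_div_of_tendsto_deriv_div_atTop (v' := fun t => a * t ^ (a - 1)) hf ?_ ?_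
      (tendsto_rpow_atTop ha) ?_
    · filter_upwards [eventually_gt_atTop 0] with t ht
      exact hasDerivAt_rpow_const (Or.inl ht.ne')
    · filter_upwards [eventually_gt_atTop 0] with t ht
      exact mul_pos ha (rpow_pos_of_pos ht _)
    · exact (hD.div_const a).congr fun t => by rw [div_mul_eq_div_div_swap]
  rw [tendsto_nhds_unique hC hlim]
  field_simp

theorem one_add_int_sub_one_mul_ne_zero {L : ℝ} (hL : 1 < L) (n : ℤ) :
    1 + ((n : ℝ) - 1) * L ≠ 0 := by
  rcases le_or_gt 1 n with hn | hn
  · have : (1 : ℝ) ≤ n := by exact_mod_cast hn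
    nlinarith
  · have : (n : ℝ) ≤ 0 := by exact_mod_cast Int.lt_add_one_iff.1 hn
    nlinarith

namespace A1

variable {σ ζ₁ ζ₂ : ℝ → ℝ} {lam r₀ c σ₀ c₃ : ℝ} {c1 c2 : ℕ → ℝ}

theorem wronskian_eq_one (h : A1 σ ζ₁ ζ₂ lam r₀ c σ₀ c₃ c1 c2) (s : ℝ) :
    ζ₁ s * deriv ζ₂ s - deriv ζ₁ s * ζ₂ s = 1 := by
  rw [wronskian_eq_of_hasDerivAt h.ζ₁_deriv h.ζ₁_ode h.ζ₂_deriv h.ζ₂_ode s 0,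
    h.ζ₁_init, h.ζ₁'_init, h.ζ₂_init, h.ζ₂'_init]
  ring

theorem tendsto_ζ₁_div (h : A1 σ ζ₁ ζ₂ lam r₀ c σ₀ c₃ c1 c2) :
    Tendsto (fun t => ζ₁ t / t ^ lam) atTop (𝓝 (c1 0)) :=
  tendsto_div_of_tendsto_abs_div (by simpa using h.ζ₁_asymp 0 (by norm_num))
    (eventually_gt_atTop r₀ |>.mono h.ζ₁_nonneg)

theorem tendsto_ζ₂_div (h : A1 σ ζ₁ ζ₂ lam r₀ c σ₀ c₃ c1 c2) :
    Tendsto (fun t => ζ₂ t / t ^ (1 - lam)) atTop (𝓝 (c2 0)) :=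
  tendsto_div_of_tendsto_abs_div (by simpa using h.ζ₂_asymp 0 (by norm_num))
    (eventually_gt_atTop r₀ |>.mono h.ζ₂_nonneg)

theorem c1_zero_pos (h : A1 σ ζ₁ ζ₂ lam r₀ c σ₀ c₃ c1 c2) : 0 < c1 0 :=
  pos_of_tendsto_div_rpow h.tendsto_ζ₁_div (eventually_gt_atTop r₀ |>.mono h.ζ₁_nonneg)
    (h.c1_ne 0 (by norm_num))

theorem c2_zero_pos (h : A1 σ ζ₁ ζ₂ lam r₀ c σ₀ c₃ c1 c2) : 0 < c2 0 :=
  pos_of_tendsto_div_rpow h.tendsto_ζ₂_div (eventually_gt_atTop r₀ |>.mono h.ζ₂_nonneg)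
    (h.c2_ne 0 (by norm_num))

theorem tendsto_deriv_ζ₁_div (h : A1 σ ζ₁ ζ₂ lam r₀ c σ₀ c₃ c1 c2) (hlam : 0 < lam) :
    Tendsto (fun t => deriv ζ₁ t / t ^ (lam - 1)) atTop (𝓝 (c1 1)) :=
  tendsto_deriv_div_of_tendsto_abs_deriv_div (.of_forall h.ζ₁_deriv)
    (tendsto_atTop_of_tendsto_div_rpow hlam h.c1_zero_pos h.tendsto_ζ₁_div)
    (by simpa using h.ζ₁_asymp 1 (by norm_num)) (h.c1_ne 1 (by norm_num))

theorem tendsto_deriv_ζ₂_div (h : A1 σ ζ₁ ζ₂ lam r₀ c σ₀ c₃ c1 c2) :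
    Tendsto (fun t => deriv ζ₂ t / t ^ (1 - lam - 1)) atTop (𝓝 (c2 1)) :=
  tendsto_deriv_div_of_tendsto_abs_deriv_div (.of_forall h.ζ₂_deriv)
    (tendsto_atTop_of_tendsto_div_rpow (by linarith [h.lam_lt_half]) h.c2_zero_pos
      h.tendsto_ζ₂_div)
    (by simpa using h.ζ₂_asymp 1 (by norm_num)) (h.c2_ne 1 (by norm_num))

theorem c1_zero_mul_c2_zero (h : A1 σ ζ₁ ζ₂ lam r₀ c σ₀ c₃ c1 c2) (hlam : 0 < lam) :
    c1 0 * c2 0 * (1 - 2 * lam) = 1 := by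
  have hc1 := coeff_deriv_eq_of_tendsto_div_rpow hlam (.of_forall h.ζ₁_deriv)
    h.tendsto_ζ₁_div (h.tendsto_deriv_ζ₁_div hlam)
  have hc2 := coeff_deriv_eq_of_tendsto_div_rpow (by linarith [h.lam_lt_half])
    (.of_forall h.ζ₂_deriv) h.tendsto_ζ₂_div h.tendsto_deriv_ζ₂_div
  have hW := (tendsto_mul_of_tendsto_div_rpow (by ring) h.tendsto_ζ₁_div h.tendsto_deriv_ζ₂_div).sub
    (tendsto_mul_of_tendsto_div_rpow (by ring) (h.tendsto_deriv_ζ₁_div hlam) h.tendsto_ζ₂_div)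
  simp only [h.wronskian_eq_one] at hW
  have hlim := tendsto_nhds_unique tendsto_const_nhds hW
  rw [hc1, hc2] at hlim
  linear_combination -hlim

theorem tendsto_ζ₁_mul_deriv_ζ₂ (h : A1 σ ζ₁ ζ₂ lam r₀ c σ₀ c₃ c1 c2) (hlam : 0 < lam) :
    Tendsto (fun s => ζ₁ s * deriv ζ₂ s) atTop (𝓝 ((1 - lam) / (1 - 2 * lam))) := by
  have hlim := tendsto_mul_of_tendsto_div_rpow (by ring) h.tendsto_ζ₁_div h.tendsto_deriv_ζ₂_div
  convert hlim using 2
  rw [coeff_deriv_eq_of_tendsto_div_rpow (by linarith [h.lam_lt_half]) (.of_forall h.ζ₂_deriv)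
    h.tendsto_ζ₂_div h.tendsto_deriv_ζ₂_div, div_eq_iff (by linarith [h.lam_lt_half])]
  linear_combination -(1 - lam) * h.c1_zero_mul_c2_zero hlam

end A1

/-- the Wronskian identity, the limit of `ζ₁ ζ₂'`, and the eventual
non-vanishing of `1 + (n-1) ζ₁ ζ₂'`. -/
theorem statement6
    (σ ζ₁ ζ₂ : ℝ → ℝ) (lam r₀ c σ₀ c₃ : ℝ) (c1 c2 : ℕ → ℝ)
    (hA1 : A1 σ ζ₁ ζ₂ lam r₀ c σ₀ c₃ c1 c2) (hlam : 0 < lam) :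
    (∀ s : ℝ, 0 ≤ s → ζ₁ s * deriv ζ₂ s - deriv ζ₁ s * ζ₂ s = 1) ∧
    Tendsto (fun s => ζ₁ s * deriv ζ₂ s) atTop (nhds ((1 - lam)/(1 - 2*lam))) ∧
    (∀ n : ℤ, ∃ s₀ ≥ r₀, ∀ s ≥ s₀, 1 + ((n:ℝ) - 1) * ζ₁ s * deriv ζ₂ s ≠ 0) := by
  have hlim := hA1.tendsto_ζ₁_mul_deriv_ζ₂ hlam
  refine ⟨fun s _ => hA1.wronskian_eq_one s, hlim, fun n => ?_⟩
  have hL : 1 < (1 - lam) / (1 - 2 * lam) := by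
    rw [one_lt_div (by linarith [hA1.lam_lt_half])]
    linarith
  obtain ⟨T, hT⟩ := eventually_atTop.1 <|
    ((hlim.const_mul ((n : ℝ) - 1)).const_add 1).eventually_ne
      (one_add_int_sub_one_mul_ne_zero hL n)
  refine ⟨max T r₀, le_max_right _ _, fun s hs => ?_⟩
  simpa only [mul_assoc] using hT s (le_of_max_le_left hs)
end
end

section
/- Let d ≥ 1, ψ ∈ 𝒮(ℝ^d) (Schwartz class), s ∈ ℝ, θ ∈ [0,2], and ρ ∈ (0,1]; if θ ∈ (1,2], assume in addition ∇ψ(0) = 0. Then there exists C > 0 such that for every t > 0, every n ∈ ℤ∖{0}, and every u with |ξ|^{s+θ} û ∈ L²(ℝ^d): ‖ |ξ|^s ( ψ(ξ/(|n| t^{ρ/2})) − ψ(0) ) û(ξ) ‖_{L²} ≤ C t^{−ρθ/2} |n|^{−θ} ‖ |ξ|^{s+θ} û(ξ) ‖_{L²}. Equivalently, the operator 𝒦_ψ − ψ(0), with 𝒦_ψ u = 𝓕^{−1}[ψ(ξ/(|n|t^{ρ/2})) û], is bounded from Ḣ^{s+θ}(ℝ^d) to Ḣ^{s}(ℝ^d)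 with operator norm at most C t^{−ρθ/2} |n|^{−θ}. -/
noncomputable section

open MeasureTheory Real
open scoped ENNReal FourierTransform SchwartzMap

lemma norm_fderiv_eq_iterated {E F : Type*} [NormedAddCommGroup E] [NormedSpace ℝ E]
    [NormedAddCommGroup F] [NormedSpace ℝ F] (f : E → F) (x : E) :
    ‖fderiv ℝ f x‖ = ‖iteratedFDeriv ℝ 1 f x‖ := by
  rw [← norm_iteratedFDeriv_fderiv (n := 0), norm_iteratedFDeriv_zero]

/-- Hölder-type bound for a Schwartz function near (and away from) the origin. -/
lemma schwartz_holder_bound {d : ℕ} (ψ : SchwartzMap (Ed d) ℂ) (θ : ℝ)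
    (hθ : θ ∈ Set.Icc (0:ℝ) 2) (hψ' : 1 < θ → fderiv ℝ (ψ : Ed d → ℂ) 0 = 0) :
    ∃ C > (0:ℝ), ∀ x : Ed d, ‖ψ x - ψ 0‖ ≤ C * ‖x‖ ^ θ := by
  set M : ℝ := SchwartzMap.seminorm ℝ 0 0 ψ with hMdef
  set L : ℝ := SchwartzMap.seminorm ℝ 0 1 ψ with hLdef
  set K : ℝ := SchwartzMap.seminorm ℝ 0 2 ψ with hKdef
  have hM0 : 0 ≤ M := apply_nonneg _ _
  have hL0 : 0 ≤ L := apply_nonneg _ _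
  have hK0 : 0 ≤ K := apply_nonneg _ _
  have hM : ∀ x : Ed d, ‖ψ x‖ ≤ M := fun x => SchwartzMap.norm_le_seminorm ℝ ψ x
  have hL : ∀ x : Ed d, ‖fderiv ℝ (ψ : Ed d → ℂ) x‖ ≤ L := by
    intro x
    rw [norm_fderiv_eq_iterated]
    exact SchwartzMap.norm_iteratedFDeriv_le_seminorm ℝ ψ 1 x
  have hsmooth := ψ.smooth (⊤ : ℕ∞)
  have hdiff : Differentiable ℝ (ψ : Ed d → ℂ) := hsmooth.differentiable (by simp)
  have hdiff' : Differentiable ℝ (fderiv ℝ (ψ : Ed d → ℂ)) :=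
    (hsmooth.fderiv_right (m := (⊤ : ℕ∞)) (by exact_mod_cast le_top)).differentiable
      (by simp)
  have hK2 : ∀ y : Ed d, ‖fderiv ℝ (fderiv ℝ (ψ : Ed d → ℂ)) y‖ ≤ K := by
    intro y
    rw [norm_fderiv_eq_iterated, norm_iteratedFDeriv_fderiv]
    exact SchwartzMap.norm_iteratedFDeriv_le_seminorm ℝ ψ 2 y
  -- Lipschitz bound for fderiv ψ
  have hlipD : ∀ x : Ed d, ‖fderiv ℝ (ψ : Ed d → ℂ) x - fderiv ℝ (ψ : Ed d → ℂ) 0‖ ≤ K * ‖x‖ := by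
    intro x
    have := (convex_univ : Convex ℝ (Set.univ : Set (Ed d))).norm_image_sub_le_of_norm_fderiv_le
      (f := fderiv ℝ (ψ : Ed d → ℂ)) (fun y _ => hdiff' y) (fun y _ => hK2 y)
      (Set.mem_univ (0 : Ed d)) (Set.mem_univ x)
    simpa using this
  refine ⟨2 * M + L + K + 1, by positivity, fun x => ?_⟩
  set C : ℝ := 2 * M + L + K + 1 with hCdef
  have hCM : 2 * M ≤ C := by nlinarith
  have hCL : L ≤ C := by nlinarith
  have hCK : K ≤ C := by nlinarith
  by_cases hx1 : 1 ≤ ‖x‖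
  · have h1 : (1:ℝ) ≤ ‖x‖ ^ θ := Real.one_le_rpow hx1 hθ.1
    calc ‖ψ x - ψ 0‖ ≤ ‖ψ x‖ + ‖ψ 0‖ := norm_sub_le _ _
    _ ≤ M + M := add_le_add (hM x) (hM 0)
    _ = 2 * M := by ring
    _ ≤ C := hCM
    _ = C * 1 := (mul_one C).symm
    _ ≤ C * ‖x‖ ^ θ := by
        have hC0 : (0:ℝ) ≤ C := by positivity
        exact mul_le_mul_of_nonneg_left h1 hC0
  · push_neg at hx1
    by_cases hx0 : x = 0
    · simp only [hx0, sub_self, norm_zero]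
      positivity
    · have hxpos : 0 < ‖x‖ := norm_pos_iff.mpr hx0
      by_cases hθ1 : θ ≤ 1
      · -- Lipschitz case
        have hmv : ‖ψ x - ψ 0‖ ≤ L * ‖x‖ := by
          have := (convex_univ : Convex ℝ (Set.univ : Set (Ed d))).norm_image_sub_le_of_norm_fderiv_le
            (f := (ψ : Ed d → ℂ)) (fun y _ => hdiff y) (fun y _ => hL y)
            (Set.mem_univ (0 : Ed d)) (Set.mem_univ x)
          simpa using this
        have hr : ‖x‖ ≤ ‖x‖ ^ θ := by
          have := Real.rpow_le_rpow_of_exponent_ge hxpos hx1.le hθ1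
          simpa [Real.rpow_one] using this
        calc ‖ψ x - ψ 0‖ ≤ L * ‖x‖ := hmv
        _ ≤ L * ‖x‖ ^ θ := mul_le_mul_of_nonneg_left hr hL0
        _ ≤ C * ‖x‖ ^ θ := mul_le_mul_of_nonneg_right hCL (Real.rpow_nonneg (norm_nonneg x) θ)
      · push_neg at hθ1
        have hD0 : fderiv ℝ (ψ : Ed d → ℂ) 0 = 0 := hψ' hθ1
        -- second order bound on the closed ball of radius ‖x‖
        have hmv : ‖ψ x - ψ 0‖ ≤ (K * ‖x‖) * ‖x‖ := by
          have := (convex_closedBall (0 : Ed d) ‖x‖).norm_image_sub_le_of_norm_fderiv_le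
            (f := (ψ : Ed d → ℂ)) (fun y _ => hdiff y)
            (fun y hy => by
              have h1 : ‖fderiv ℝ (ψ : Ed d → ℂ) y‖ ≤ K * ‖y‖ := by
                have := hlipD y
                rwa [hD0, sub_zero] at this
              have h2 : ‖y‖ ≤ ‖x‖ := by
                simpa using Metric.mem_closedBall.mp hy
              exact h1.trans (mul_le_mul_of_nonneg_left h2 hK0))
            (Metric.mem_closedBall_self (norm_nonneg x))
            (mem_closedBall_zero_iff.mpr le_rfl)
          simpa using this
        have hr : ‖x‖ ^ (2:ℝ) ≤ ‖x‖ ^ θ :=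
          Real.rpow_le_rpow_of_exponent_ge hxpos hx1.le hθ.2
        have hsq : (K * ‖x‖) * ‖x‖ = K * ‖x‖ ^ (2:ℝ) := by
          rw [Real.rpow_two]; ring
        calc ‖ψ x - ψ 0‖ ≤ (K * ‖x‖) * ‖x‖ := hmv
        _ = K * ‖x‖ ^ (2:ℝ) := hsq
        _ ≤ K * ‖x‖ ^ θ := mul_le_mul_of_nonneg_left hr hK0
        _ ≤ C * ‖x‖ ^ θ := mul_le_mul_of_nonneg_right hCK (Real.rpow_nonneg (norm_nonneg x) θ)

/-- the regularizing operator `𝒦_ψ - ψ(0)` is bounded from `Ḣ^{s+θ}` to `Ḣ^s`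
with norm `≲ t^{-ρθ/2} |n|^{-θ}`, stated on the Fourier side. -/
theorem statement7
    (d : ℕ) (hd : 1 ≤ d) (ψ : SchwartzMap (Ed d) ℂ) (s θ ρ : ℝ)
    (hθ : θ ∈ Set.Icc (0:ℝ) 2) (hρ : ρ ∈ Set.Ioc (0:ℝ) 1)
    (hψ' : 1 < θ → fderiv ℝ (ψ : Ed d → ℂ) 0 = 0) :
    ∃ C > (0:ℝ), ∀ t : ℝ, 0 < t → ∀ n : ℤ, n ≠ 0 →
      ∀ u : Ed d → ℂ,
        MemLp (fun ξ : Ed d => (‖ξ‖ ^ (s+θ) : ℝ) • 𝓕 u ξ) 2 (volume : Measure (Ed d)) →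
        eLpNorm (fun ξ : Ed d =>
            (‖ξ‖ ^ s : ℝ) •
              ((ψ (((|(n:ℝ)| * t ^ (ρ/2))⁻¹ : ℝ) • ξ) - ψ 0) * 𝓕 u ξ)) 2 volume ≤
          ENNReal.ofReal (C * t ^ (-(ρ*θ/2)) * |(n:ℝ)| ^ (-θ)) *
            eLpNorm (fun ξ : Ed d => (‖ξ‖ ^ (s+θ) : ℝ) • 𝓕 u ξ) 2 volume := by
  obtain ⟨C, hC, hbound⟩ := schwartz_holder_bound ψ θ hθ hψ'
  refine ⟨C, hC, fun t ht n hn u _ => ?_⟩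
  have hnpos : (0:ℝ) < |(n:ℝ)| := abs_pos.mpr (by exact_mod_cast hn)
  set lam : ℝ := |(n:ℝ)| * t ^ (ρ/2) with hlamdef
  have hlam : 0 < lam := mul_pos hnpos (Real.rpow_pos_of_pos ht _)
  set a : ℝ := C * t ^ (-(ρ*θ/2)) * |(n:ℝ)| ^ (-θ) with hadef
  have ha : 0 < a := by
    apply mul_pos (mul_pos hC (Real.rpow_pos_of_pos ht _)) (Real.rpow_pos_of_pos hnpos _)
  -- the key algebraic identity
  have hlamid : C * (lam⁻¹) ^ θ = a := by
    rw [Real.inv_rpow hlam.le, ← Real.rpow_neg hlam.le, hlamdef,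
      Real.mul_rpow (abs_nonneg _) (Real.rpow_nonneg ht.le _),
      ← Real.rpow_mul ht.le, hadef]
    have : ρ / 2 * -θ = -(ρ * θ / 2) := by ring
    rw [this]; ring
  -- pointwise bound
  have hpt : ∀ ξ : Ed d,
      ‖(‖ξ‖ ^ s : ℝ) • ((ψ ((lam⁻¹ : ℝ) • ξ) - ψ 0) * 𝓕 u ξ)‖ ≤
        a * ‖(‖ξ‖ ^ (s+θ) : ℝ) • 𝓕 u ξ‖ := by
    intro ξ
    rw [norm_smul, norm_smul, norm_mul, Real.norm_eq_abs, Real.norm_eq_abs,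
      abs_of_nonneg (Real.rpow_nonneg (norm_nonneg ξ) s),
      abs_of_nonneg (Real.rpow_nonneg (norm_nonneg ξ) (s+θ))]
    by_cases hξ : ξ = 0
    · simp only [hξ, smul_zero, sub_self, norm_zero, zero_mul, mul_zero]
      positivity
    · have hξpos : 0 < ‖ξ‖ := norm_pos_iff.mpr hξ
      have hsc : ‖(lam⁻¹ : ℝ) • ξ‖ = lam⁻¹ * ‖ξ‖ := by
        rw [norm_smul, Real.norm_eq_abs, abs_of_pos (inv_pos.mpr hlam)]
      have hψb : ‖ψ ((lam⁻¹ : ℝ) • ξ) - ψ 0‖ ≤ C * (lam⁻¹) ^ θ * ‖ξ‖ ^ θ := by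
        have := hbound ((lam⁻¹ : ℝ) • ξ)
        rwa [hsc, Real.mul_rpow (inv_pos.mpr hlam).le (norm_nonneg ξ), ← mul_assoc] at this
      calc ‖ξ‖ ^ s * (‖ψ ((lam⁻¹ : ℝ) • ξ) - ψ 0‖ * ‖𝓕 u ξ‖)
          ≤ ‖ξ‖ ^ s * ((C * (lam⁻¹) ^ θ * ‖ξ‖ ^ θ) * ‖𝓕 u ξ‖) := by
            apply mul_le_mul_of_nonneg_left _ (Real.rpow_nonneg (norm_nonneg ξ) s)
            exact mul_le_mul_of_nonneg_right hψb (norm_nonneg _)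
        _ = (C * (lam⁻¹) ^ θ) * (‖ξ‖ ^ s * ‖ξ‖ ^ θ * ‖𝓕 u ξ‖) := by ring
        _ = a * (‖ξ‖ ^ (s+θ) * ‖𝓕 u ξ‖) := by
            rw [hlamid, ← Real.rpow_add hξpos]
  -- conclude via eLpNorm monotonicity
  have hfinal := eLpNorm_le_nnreal_smul_eLpNorm_of_ae_le_mul
    (μ := (volume : Measure (Ed d)))
    (f := fun ξ : Ed d => (‖ξ‖ ^ s : ℝ) • ((ψ ((lam⁻¹ : ℝ) • ξ) - ψ 0) * 𝓕 u ξ))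
    (g := fun ξ : Ed d => (‖ξ‖ ^ (s+θ) : ℝ) • 𝓕 u ξ)
    (c := a.toNNReal)
    (Filter.Eventually.of_forall fun ξ => by
      rw [← NNReal.coe_le_coe]
      push_cast
      rw [Real.coe_toNNReal _ ha.le]
      exact hpt ξ) 2
  have hcoe : (a.toNNReal : ℝ≥0∞) = ENNReal.ofReal a := rfl
  rw [ENNReal.smul_def, smul_eq_mul, hcoe] at hfinal
  exact hfinal
end
end

section
/- For every α ≥ 1 there exists a constant C = C(α) > 0 such that for all n ∈ ℤ and all z, w ∈ ℂ: | |z|^{α−n} z^n − |w|^{α−n} w^n | ≤ C max(|n|, 1) ( |z|^{α−1} + |w|^{α−1} ) |z − w|. -/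
noncomputable section

open Real

/-- `|z|^{β-n} z^n`, understood as `0` when `z = 0`. -/
def cpowAbs (β : ℝ) (n : ℤ) (z : ℂ) : ℂ :=
  if z = 0 then 0 else ((‖z‖ ^ (β - (n:ℝ)) : ℝ) : ℂ) * z ^ n


lemma abs_pow_sub_pow_le_nat (u v : ℂ) (hu : ‖u‖ ≤ 1) (hv : ‖v‖ ≤ 1) (n : ℕ) :
    ‖u ^ n - v ^ n‖ ≤ n * ‖u - v‖ := by
  induction n with
  | zero => simp
  | succ n ih =>
    have hid : u ^ (n + 1) - v ^ (n + 1) = u * (u ^ n - v ^ n) + (u - v) * v ^ n := by ring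
    have h1 := norm_add_le (u * (u ^ n - v ^ n)) ((u - v) * v ^ n)
    rw [hid]
    have h2 : ‖u * (u ^ n - v ^ n)‖ ≤ ‖u ^ n - v ^ n‖ := by
      rw [norm_mul]
      exact mul_le_of_le_one_left (norm_nonneg _) hu
    have h3 : ‖(u - v) * v ^ n‖ ≤ ‖u - v‖ := by
      rw [norm_mul, norm_pow]
      exact mul_le_of_le_one_right (norm_nonneg _)
        (pow_le_one₀ (norm_nonneg _) hv)
    push_cast
    nlinarith [norm_nonneg (u - v)]

lemma abs_zpow_sub_zpow_le (u v : ℂ) (hu : ‖u‖ = 1) (hv : ‖v‖ = 1) (n : ℤ) :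
    ‖u ^ n - v ^ n‖ ≤ |(n : ℝ)| * ‖u - v‖ := by
  have hu0 : u ≠ 0 := by intro h; simp [h] at hu
  have hv0 : v ≠ 0 := by intro h; simp [h] at hv
  cases n with
  | ofNat m =>
    simpa [abs_of_nonneg, Int.cast_natCast] using
      abs_pow_sub_pow_le_nat u v hu.le hv.le m
  | negSucc m =>
    rw [zpow_negSucc, zpow_negSucc]
    have hum : ‖u ^ (m + 1)‖ = 1 := by rw [norm_pow, hu, one_pow]
    have hvm : ‖v ^ (m + 1)‖ = 1 := by rw [norm_pow, hv, one_pow]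
    have hu0' : u ^ (m + 1) ≠ 0 := pow_ne_zero _ hu0
    have hv0' : v ^ (m + 1) ≠ 0 := pow_ne_zero _ hv0
    have hid : (u ^ (m + 1))⁻¹ - (v ^ (m + 1))⁻¹ =
        (v ^ (m + 1) - u ^ (m + 1)) / (u ^ (m + 1) * v ^ (m + 1)) := by
      field_simp
    rw [hid, norm_div, norm_mul, hum, hvm]
    have := abs_pow_sub_pow_le_nat u v hu.le hv.le (m + 1)
    have habs : ‖v ^ (m + 1) - u ^ (m + 1)‖ =
        ‖u ^ (m + 1) - v ^ (m + 1)‖ := by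
      rw [← norm_neg]; ring_nf
    have hn : |((Int.negSucc m : ℤ) : ℝ)| = (m : ℝ) + 1 := by
      rw [Int.cast_negSucc, abs_neg, abs_of_nonneg (by positivity)]
      push_cast; ring
    rw [hn]
    calc ‖v ^ (m + 1) - u ^ (m + 1)‖ / (1 * 1)
        = ‖u ^ (m + 1) - v ^ (m + 1)‖ := by rw [habs]; ring
      _ ≤ (m + 1 : ℕ) * ‖u - v‖ := this
      _ = ((m : ℝ) + 1) * ‖u - v‖ := by push_cast; ring

lemma rpow_sub_rpow_le' (α a b : ℝ) (hα : 1 ≤ α) (hb : 0 ≤ b) (hba : b ≤ a) :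
    a ^ α - b ^ α ≤ α * a ^ (α - 1) * (a - b) := by
  have ha : 0 ≤ a := le_trans hb hba
  rcases eq_or_lt_of_le ha with h | h
  · have hb0 : b = 0 := le_antisymm (h ▸ hba) hb
    subst hb0
    rw [← h, Real.zero_rpow (by linarith : α ≠ 0)]
    simp
  · set y := b / a with hy
    have hy0 : 0 ≤ y := div_nonneg hb h.le
    have hy1 : y ≤ 1 := (div_le_one h).mpr hba
    have hbern := one_add_mul_self_le_rpow_one_add (s := y - 1) (by linarith) hα
    have h1 : 1 + α * (y - 1) ≤ y ^ α := by simpa using hbern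
    have hbeq : b = a * y := by rw [hy]; field_simp
    have hbrpow : b ^ α = a ^ α * y ^ α := by
      rw [hbeq, Real.mul_rpow h.le hy0]
    have haeq : a ^ α = a ^ (α - 1) * a := by
      rw [← Real.rpow_add_one h.ne' (α - 1)]; ring_nf
    have hApos : 0 ≤ a ^ (α - 1) := Real.rpow_nonneg h.le _
    have key : a ^ α * (1 - y ^ α) ≤ α * (a ^ α * (1 - y)) := by
      nlinarith [mul_le_mul_of_nonneg_left h1 (Real.rpow_nonneg h.le α)]
    calc a ^ α - b ^ α = a ^ α * (1 - y ^ α) := by rw [hbrpow]; ring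
      _ ≤ α * (a ^ α * (1 - y)) := key
      _ = α * a ^ (α - 1) * (a - b) := by rw [haeq, hbeq]; ring

lemma unit_diff (z w : ℂ) (hz : z ≠ 0) (hw : w ≠ 0)
    (hle : ‖w‖ ≤ ‖z‖) :
    ‖z‖ * ‖z / (‖z‖ : ℂ) - w / (‖w‖ : ℂ)‖ ≤
      2 * ‖z - w‖ := by
  set a := ‖z‖ with haz
  set b := ‖w‖ with hbz
  have ha : 0 < a := norm_pos_iff.mpr hz
  have hb : 0 < b := norm_pos_iff.mpr hw
  have ha0 : (a : ℂ) ≠ 0 := by exact_mod_cast ha.ne'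
  have hb0 : (b : ℂ) ≠ 0 := by exact_mod_cast hb.ne'
  have key : (a : ℂ) * (z / (a : ℂ) - w / (b : ℂ)) =
      (z - w) + w * (((b - a : ℝ) : ℂ) / (b : ℂ)) := by
    push_cast
    field_simp
    ring
  have h1 : a * ‖z / (a : ℂ) - w / (b : ℂ)‖ =
      ‖(a : ℂ) * (z / (a : ℂ) - w / (b : ℂ))‖ := by
    rw [norm_mul, Complex.norm_real, Real.norm_eq_abs, abs_of_pos ha]
  rw [h1, key]
  have h2 := norm_add_le (z - w) (w * (((b - a : ℝ) : ℂ) / (b : ℂ)))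
  have h3 : ‖w * (((b - a : ℝ) : ℂ) / (b : ℂ))‖ = |b - a| := by
    rw [norm_mul, norm_div, Complex.norm_real, Real.norm_eq_abs, Complex.norm_real, Real.norm_eq_abs,
      abs_of_pos hb, ← hbz]
    field_simp
  have h4 : |b - a| ≤ ‖z - w‖ := by
    have h5 := abs_norm_sub_norm_le w z
    have h6 : ‖w - z‖ = ‖z - w‖ := by
      rw [← norm_neg]; ring_nf
    rw [← haz, ← hbz, h6] at h5
    exact h5
  linarith

lemma cpowAbs_eq (α : ℝ) (n : ℤ) (z : ℂ) (hz : z ≠ 0) :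
    cpowAbs α n z = ((‖z‖ ^ α : ℝ) : ℂ) * (z / (‖z‖ : ℂ)) ^ n := by
  have ha : (0:ℝ) < ‖z‖ := norm_pos_iff.mpr hz
  have ha0 : (‖z‖ : ℂ) ≠ 0 := by exact_mod_cast ha.ne'
  rw [cpowAbs, if_neg hz, div_zpow, Real.rpow_sub ha, Real.rpow_intCast]
  rw [div_eq_mul_inv, Complex.ofReal_mul, Complex.ofReal_inv, Complex.ofReal_zpow]
  rw [div_eq_mul_inv]
  ring

lemma abs_unit (z : ℂ) (hz : z ≠ 0) :
    ‖z / (‖z‖ : ℂ)‖ = 1 := by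
  have ha : (0:ℝ) < ‖z‖ := norm_pos_iff.mpr hz
  rw [norm_div, Complex.norm_real, Real.norm_eq_abs, abs_of_pos ha, div_self ha.ne']

lemma main_est (α : ℝ) (hα : 1 ≤ α) (n : ℤ) (z w : ℂ)
    (hle : ‖w‖ ≤ ‖z‖) :
    ‖cpowAbs α n z - cpowAbs α n w‖ ≤
      (α + 2) * max (|(n:ℝ)|) 1 * (‖z‖ ^ (α - 1) + ‖w‖ ^ (α - 1)) *
        ‖z - w‖ := by
  set a := ‖z‖ with haz
  set b := ‖w‖ with hbz
  set M := max (|(n:ℝ)|) 1 with hM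
  have hM1 : 1 ≤ M := le_max_right _ _
  have hMn : |(n:ℝ)| ≤ M := le_max_left _ _
  by_cases hz : z = 0
  · have hw : w = 0 := by
      have : b ≤ 0 := by rw [haz, hz] at hle; simpa using hle
      exact norm_eq_zero.mp (le_antisymm this (norm_nonneg _))
    subst hz; subst hw
    simp [cpowAbs]
  have ha : 0 < a := norm_pos_iff.mpr hz
  have hApos : 0 ≤ a ^ (α - 1) := Real.rpow_nonneg ha.le _
  have hd : 0 ≤ ‖z - w‖ := norm_nonneg _
  by_cases hw : w = 0
  · subst hw
    rw [show cpowAbs α n 0 = 0 by simp [cpowAbs], sub_zero]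
    rw [cpowAbs_eq α n z hz, norm_mul, Complex.norm_real, Real.norm_eq_abs, norm_zpow, abs_unit z hz,
      one_zpow, mul_one, abs_of_nonneg (Real.rpow_nonneg ha.le _)]
    have haeq : a ^ α = a ^ (α - 1) * a := by
      rw [← Real.rpow_add_one ha.ne' (α - 1)]; ring_nf
    have hsub : ‖z - 0‖ = a := by simp [haz]
    rw [hsub, haeq]
    have hBpos : 0 ≤ ‖(0:ℂ)‖ ^ (α - 1) := Real.rpow_nonneg (norm_nonneg _) _
    have hCM : (0:ℝ) ≤ (α + 2) * M := by nlinarith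
    nlinarith [mul_nonneg hApos ha.le, mul_nonneg (mul_nonneg hCM hBpos) ha.le,
      mul_nonneg (mul_nonneg hApos ha.le) (by nlinarith : (0:ℝ) ≤ (α+2)*M - 1)]
  have hb : 0 < b := norm_pos_iff.mpr hw
  have hBpos : 0 ≤ b ^ (α - 1) := Real.rpow_nonneg hb.le _
  set u := z / (a : ℂ) with hu
  set v := w / (b : ℂ) with hv
  have hu1 : ‖u‖ = 1 := abs_unit z hz
  have hv1 : ‖v‖ = 1 := abs_unit w hw
  rw [cpowAbs_eq α n z hz, cpowAbs_eq α n w hw]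
  have decomp : ((a ^ α : ℝ) : ℂ) * u ^ n - ((b ^ α : ℝ) : ℂ) * v ^ n =
      ((a ^ α - b ^ α : ℝ) : ℂ) * u ^ n + ((b ^ α : ℝ) : ℂ) * (u ^ n - v ^ n) := by
    push_cast; ring
  rw [decomp]
  have hstep1 := norm_add_le (((a ^ α - b ^ α : ℝ) : ℂ) * u ^ n)
    (((b ^ α : ℝ) : ℂ) * (u ^ n - v ^ n))
  have habs1 : ‖((a ^ α - b ^ α : ℝ) : ℂ) * u ^ n‖ = a ^ α - b ^ α := by
    rw [norm_mul, Complex.norm_real, Real.norm_eq_abs, norm_zpow, hu1, one_zpow, mul_one,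
      abs_of_nonneg (by
        have := Real.rpow_le_rpow hb.le hle (by linarith : (0:ℝ) ≤ α)
        linarith)]
  have habs2 : ‖((b ^ α : ℝ) : ℂ) * (u ^ n - v ^ n)‖ =
      b ^ α * ‖u ^ n - v ^ n‖ := by
    rw [norm_mul, Complex.norm_real, Real.norm_eq_abs, abs_of_nonneg (Real.rpow_nonneg hb.le _)]
  -- bound on first term
  have h2 : a ^ α - b ^ α ≤ α * a ^ (α - 1) * ‖z - w‖ := by
    have hmvt := rpow_sub_rpow_le' α a b hα hb.le hle
    have h4 : a - b ≤ ‖z - w‖ := by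
      have h5 := abs_norm_sub_norm_le z w
      rw [← haz, ← hbz] at h5
      calc a - b ≤ |a - b| := le_abs_self _
        _ ≤ ‖z - w‖ := h5
    nlinarith [mul_nonneg (by linarith : (0:ℝ) ≤ α) hApos]
  -- bound on second term
  have h3 : ‖u ^ n - v ^ n‖ * a ≤ |(n:ℝ)| * (2 * ‖z - w‖) := by
    have hz1 := abs_zpow_sub_zpow_le u v hu1 hv1 n
    have hz2 := unit_diff z w hz hw hle
    rw [← haz, ← hbz, ← hu, ← hv] at hz2
    nlinarith [abs_nonneg ((n:ℝ)), norm_nonneg (u - v), norm_nonneg (u ^ n - v ^ n)]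
  have hba' : b ^ α ≤ b ^ (α - 1) * a := by
    have : b ^ α = b ^ (α - 1) * b := by
      rw [← Real.rpow_add_one hb.ne' (α - 1)]; ring_nf
    rw [this]
    exact mul_le_mul_of_nonneg_left hle hBpos
  have h5 : b ^ α * ‖u ^ n - v ^ n‖ ≤
      2 * |(n:ℝ)| * (b ^ (α - 1) * ‖z - w‖) := by
    have hX : 0 ≤ ‖u ^ n - v ^ n‖ := norm_nonneg _
    nlinarith [mul_le_mul_of_nonneg_left h3 hBpos,
      mul_le_mul_of_nonneg_right hba' hX]
  -- combine
  have hfin1 : 0 ≤ (α + 2) * M - α := by nlinarith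
  have hfin2 : 0 ≤ (α + 2) * M - 2 * |(n:ℝ)| := by nlinarith [abs_nonneg ((n:ℝ))]
  nlinarith [mul_nonneg (mul_nonneg hApos hd) hfin1,
    mul_nonneg (mul_nonneg hBpos hd) hfin2]

/-- the difference estimate for `|z|^{α-n} z^n` when `α ≥ 1`. -/
theorem statement11 (α : ℝ) (hα : 1 ≤ α) :
    ∃ C > (0:ℝ), ∀ n : ℤ, ∀ z w : ℂ,
      ‖cpowAbs α n z - cpowAbs α n w‖ ≤
        C * max (|(n:ℝ)|) 1 * (‖z‖ ^ (α - 1) + ‖w‖ ^ (α - 1)) *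
          ‖z - w‖ := by
  refine ⟨α + 2, by linarith, ?_⟩
  intro n z w
  rcases le_total (‖w‖) (‖z‖) with h | h
  · exact main_est α hα n z w h
  · have hmain := main_est α hα n w z h
    have e1 : ‖cpowAbs α n z - cpowAbs α n w‖ =
        ‖cpowAbs α n w - cpowAbs α n z‖ := by
      rw [← norm_neg]; ring_nf
    have e2 : ‖z - w‖ = ‖w - z‖ := by
      rw [← norm_neg]; ring_nf
    rw [e1, e2]
    linarith
end
end
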